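/- Fix δ₁ > 0 and δ₂ > 0 with δ₁ + δ₂ < 1 and set ξ = 1 − δ₁ − δ₂. There exist constants F₀ > 0, F₁ > 0, F₂ > 0 (depending only on δ₁ and δ₂) such that for every r₀ with 0 < r₀ ≤ 2·ξ²·log₂ e, setting r = (1/ξ)·√(r₀/(2·log₂ e)) and N = ⌊1/r⌋ and letting Γ* = { (δ₁ + ξ·a/N, 1 − δ₁ − ξ·a/N) : a = 0,…,N }, every P ∈ Γ* and every Q ∈ Γ* differing from P by exactly ±ξ/N in the first coordinate (and ∓ξ/N in the second) satisfy F₀·r₀ ≤ V(P‖Q) ≤ F₁·r₀ and T(P‖Q) ≤ F₂·r₀^{3/2}. -/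

import Mathlib

/-- Kullback–Leibler divergence in bits between two (strictly positive) probability
vectors on `Fin k`. -/
noncomputable def klD {k : ℕ} (P Q : Fin k → ℝ) : ℝ :=
  ∑ y, P y * Real.logb 2 (P y / Q y)

/-- Variance of the log-likelihood ratio (in bits). -/
noncomputable def Vllr {k : ℕ} (P Q : Fin k → ℝ) : ℝ :=
  ∑ y, P y * (Real.logb 2 (P y / Q y) - klD P Q) ^ 2

/-- Third absolute central moment of the log-likelihood ratio (in bits). -/
noncomputable def Tllr {k : ℕ} (P Q : Fin k → ℝ) : ℝ :=
  ∑ y, P y * |Real.logb 2 (P y / Q y) - klD P Q| ^ 3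

/-! For binary `P = (p, 1 - p)` and `Q = (q, 1 - q)` the log-likelihood ratio takes two values,
differing by `Δ = log₂ (p / q) - log₂ ((1 - p) / (1 - q))`, so `V(P‖Q) = p (1 - p) Δ²` and
`T(P‖Q) ≤ |Δ|³`. On `[δ₁, 1 - δ₂]` both `log p` and `log (1 - p)` are bi-Lipschitz, so `|Δ|` is
comparable to `|p - q|`, which for adjacent grid points is `ξ / N`; and `N = ⌊1 / r⌋₊ ≥ 1` makes
`(ξ / N)²` comparable to `r₀`. -/

open Real Set

noncomputable def binaryLlrGap (p q : ℝ) : ℝ :=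
  logb 2 (p / q) - logb 2 ((1 - p) / (1 - q))

lemma binaryLlrGap_swap (p q : ℝ) : binaryLlrGap q p = -binaryLlrGap p q := by
  rw [binaryLlrGap, binaryLlrGap, ← inv_div q, ← inv_div (1 - q), logb_inv, logb_inv]
  ring

lemma Vllr_binary (p q : ℝ) :
    Vllr ![p, 1 - p] ![q, 1 - q] = p * (1 - p) * binaryLlrGap p q ^ 2 := by
  simp only [Vllr, klD, binaryLlrGap, Fin.sum_univ_two, Matrix.cons_val_zero,
    Matrix.cons_val_one]
  ring

lemma Tllr_binary {p : ℝ} (hp : p ∈ Icc 0 1) (q : ℝ) :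
    Tllr ![p, 1 - p] ![q, 1 - q]
      = p * (1 - p) * (p ^ 2 + (1 - p) ^ 2) * |binaryLlrGap p q| ^ 3 := by
  obtain ⟨hp0, hp1⟩ := hp
  simp only [Tllr, klD, binaryLlrGap, Fin.sum_univ_two, Matrix.cons_val_zero,
    Matrix.cons_val_one]
  set u := logb 2 (p / q)
  set v := logb 2 ((1 - p) / (1 - q))
  have h0 : u - (p * u + (1 - p) * v) = (1 - p) * (u - v) := by ring
  have h1 : v - (p * u + (1 - p) * v) = -(p * (u - v)) := by ring
  rw [h0, h1, abs_neg, abs_mul, abs_mul, abs_of_nonneg (sub_nonneg.2 hp1), abs_of_nonneg hp0]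
  ring

lemma Tllr_binary_le {p : ℝ} (hp : p ∈ Icc 0 1) (q : ℝ) :
    Tllr ![p, 1 - p] ![q, 1 - q] ≤ |binaryLlrGap p q| ^ 3 := by
  rw [Tllr_binary hp]
  obtain ⟨hp0, hp1⟩ := hp
  have hcoef : p * (1 - p) * (p ^ 2 + (1 - p) ^ 2) ≤ 1 := by
    nlinarith [mul_nonneg hp0 (sub_nonneg.2 hp1)]
  exact mul_le_of_le_one_left (by positivity) hcoef

lemma log_sub_log_le_sub_div {a b : ℝ} (ha : 0 < a) (hb : 0 < b) :
    log b - log a ≤ (b - a) / a := by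
  have h := log_le_sub_one_of_pos (div_pos hb ha)
  rwa [log_div hb.ne' ha.ne', div_sub_one ha.ne'] at h

lemma sub_le_log_sub_log {a b : ℝ} (ha : 0 < a) (hab : a ≤ b) (hb1 : b ≤ 1) :
    b - a ≤ log b - log a := by
  have hb : 0 < b := ha.trans_le hab
  have h := log_sub_log_le_sub_div hb ha
  have hdiv : b - a ≤ (b - a) / b := by
    rw [le_div_iff₀ hb]
    nlinarith
  have hneg : (a - b) / b = -((b - a) / b) := by ring
  linarith

lemma abs_binaryLlrGap_mem_Icc {δ₁ δ₂ p q : ℝ} (h1 : 0 < δ₁) (h2 : 0 < δ₂)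
    (hp : p ∈ Icc δ₁ (1 - δ₂)) (hq : q ∈ Icc δ₁ (1 - δ₂)) :
    |binaryLlrGap p q| ∈ Icc (2 * |p - q| / log 2) (|p - q| * (1 / δ₁ + 1 / δ₂) / log 2) := by
  wlog hpq : p ≤ q generalizing p q
  · have h := this hq hp (le_of_not_ge hpq)
    rwa [binaryLlrGap_swap, abs_neg, abs_sub_comm] at h
  obtain ⟨hp₁, hp₂⟩ := hp
  obtain ⟨hq₁, hq₂⟩ := hq
  have hp0 : 0 < p := h1.trans_le hp₁
  have hq0 : 0 < q := h1.trans_le hq₁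
  have hp1 : 0 < 1 - p := by linarith
  have hq1 : 0 < 1 - q := by linarith
  have hA₁ : q - p ≤ log q - log p := sub_le_log_sub_log hp0 hpq (by linarith)
  have hB₁ : q - p ≤ log (1 - p) - log (1 - q) := by
    simpa using sub_le_log_sub_log hq1 (by linarith : 1 - q ≤ 1 - p) (by linarith)
  have hA₂ : log q - log p ≤ (q - p) / δ₁ :=
    (log_sub_log_le_sub_div hp0 hq0).trans (div_le_div_of_nonneg_left (by linarith) h1 hp₁)
  have hB₂ : log (1 - p) - log (1 - q) ≤ (q - p) / δ₂ := by
    have h := log_sub_log_le_sub_div hq1 hp1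
    rw [sub_sub_sub_cancel_left] at h
    exact h.trans (div_le_div_of_nonneg_left (by linarith) h2 (by linarith))
  have hgap : binaryLlrGap p q = -(((log q - log p) + (log (1 - p) - log (1 - q))) / log 2) := by
    rw [binaryLlrGap, logb, logb, log_div hp0.ne' hq0.ne', log_div hp1.ne' hq1.ne']
    ring
  have hlog2 : 0 < log 2 := log_pos one_lt_two
  rw [hgap, abs_neg, abs_of_nonneg (div_nonneg (by linarith) hlog2.le),
    abs_of_nonpos (sub_nonpos.2 hpq), neg_sub]
  constructor
  · gcongr
    linarith
  · gcongr
    have : (q - p) * (1 / δ₁ + 1 / δ₂) = (q - p) / δ₁ + (q - p) / δ₂ := by ring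
    linarith

lemma binary_llr_moments_of_gap_sq {δ₁ δ₂ p q c₀ c₁ : ℝ} (h1 : 0 ≤ δ₁) (h2 : 0 ≤ δ₂)
    (hp : p ∈ Icc δ₁ (1 - δ₂)) (hg : binaryLlrGap p q ^ 2 ∈ Icc c₀ c₁) :
    δ₁ * δ₂ * c₀ ≤ Vllr ![p, 1 - p] ![q, 1 - q] ∧ Vllr ![p, 1 - p] ![q, 1 - q] ≤ c₁ ∧
      Tllr ![p, 1 - p] ![q, 1 - q] ≤ c₁ ^ ((3 : ℝ) / 2) := by
  obtain ⟨hp₁, hp₂⟩ := hp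
  have hp01 : p ∈ Icc 0 1 := ⟨h1.trans hp₁, by linarith⟩
  have hg0 : 0 ≤ binaryLlrGap p q ^ 2 := sq_nonneg _
  rw [Vllr_binary]
  refine ⟨?_, ?_, ?_⟩
  · have hvar : δ₁ * δ₂ ≤ p * (1 - p) := mul_le_mul hp₁ (by linarith) h2 hp01.1
    calc δ₁ * δ₂ * c₀ ≤ δ₁ * δ₂ * binaryLlrGap p q ^ 2 := by gcongr; exact hg.1
      _ ≤ p * (1 - p) * binaryLlrGap p q ^ 2 := by gcongr
  · have hvar : p * (1 - p) ≤ 1 := by nlinarith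
    calc p * (1 - p) * binaryLlrGap p q ^ 2 ≤ binaryLlrGap p q ^ 2 :=
          mul_le_of_le_one_left hg0 hvar
      _ ≤ c₁ := hg.2
  · have hcube : |binaryLlrGap p q| ^ 3 = (binaryLlrGap p q ^ 2) ^ ((3 : ℝ) / 2) := by
      rw [← sq_abs, ← rpow_natCast_mul (abs_nonneg _)]
      norm_num
    calc Tllr ![p, 1 - p] ![q, 1 - q] ≤ |binaryLlrGap p q| ^ 3 := Tllr_binary_le hp01 q
      _ = (binaryLlrGap p q ^ 2) ^ ((3 : ℝ) / 2) := hcube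
      _ ≤ c₁ ^ ((3 : ℝ) / 2) := rpow_le_rpow hg0 hg.2 (by norm_num)

lemma binaryLlrGap_sq_mem_Icc {δ₁ δ₂ p q c : ℝ} (h1 : 0 < δ₁) (h2 : 0 < δ₂)
    (hp : p ∈ Icc δ₁ (1 - δ₂)) (hq : q ∈ Icc δ₁ (1 - δ₂))
    (hpq : (p - q) ^ 2 ∈ Icc (c * log 2 / 2) (2 * c * log 2)) :
    binaryLlrGap p q ^ 2 ∈ Icc (2 / log 2 * c) (2 * (1 / δ₁ + 1 / δ₂) ^ 2 / log 2 * c) := by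
  obtain ⟨hlo, hhi⟩ := abs_binaryLlrGap_mem_Icc h1 h2 hp hq
  have hlog2 : 0 < log 2 := log_pos one_lt_two
  rw [← sq_abs (p - q)] at hpq
  rw [← sq_abs (binaryLlrGap p q)]
  constructor
  · calc 2 / log 2 * c = 4 * (c * log 2 / 2) / log 2 ^ 2 := by field_simp; ring
      _ ≤ 4 * |p - q| ^ 2 / log 2 ^ 2 := by gcongr; exact hpq.1
      _ = (2 * |p - q| / log 2) ^ 2 := by ring
      _ ≤ |binaryLlrGap p q| ^ 2 := by gcongr
  · calc |binaryLlrGap p q| ^ 2 ≤ (|p - q| * (1 / δ₁ + 1 / δ₂) / log 2) ^ 2 := by gcongr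
      _ = |p - q| ^ 2 * (1 / δ₁ + 1 / δ₂) ^ 2 / log 2 ^ 2 := by ring
      _ ≤ 2 * c * log 2 * (1 / δ₁ + 1 / δ₂) ^ 2 / log 2 ^ 2 := by gcongr; exact hpq.2
      _ = 2 * (1 / δ₁ + 1 / δ₂) ^ 2 / log 2 * c := by field_simp

lemma grid_point_mem_Icc {δ₁ δ₂ ξ : ℝ} (hξ : ξ = 1 - δ₁ - δ₂) (hξ0 : 0 ≤ ξ) {a N : ℕ}
    (ha : a ≤ N) : δ₁ + ξ * a / N ∈ Icc δ₁ (1 - δ₂) := by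
  have ha0 : (0 : ℝ) ≤ a / N := by positivity
  have ha1 : (a : ℝ) / N ≤ 1 := div_le_one_of_le₀ (by exact_mod_cast ha) (Nat.cast_nonneg _)
  rw [mul_div_assoc]
  constructor <;> nlinarith

lemma div_natFloor_div_mem_Icc {s ξ : ℝ} (hs : 0 < s) (hsξ : s ≤ ξ) :
    ξ / ⌊ξ / s⌋₊ ∈ Icc s (2 * s) := by
  have hx : 1 ≤ ξ / s := (one_le_div hs).2 hsξ
  have hN : (0 : ℝ) < ⌊ξ / s⌋₊ := by exact_mod_cast Nat.floor_pos.2 hx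
  constructor
  · rw [le_div_iff₀ hN, ← le_div_iff₀' hs]
    exact Nat.floor_le (zero_le_one.trans hx)
  · rw [div_le_iff₀ hN]
    have := Nat.div_two_lt_floor hx
    rw [div_div, div_lt_iff₀ (by positivity)] at this
    linarith

lemma grid_step_sq_mem_Icc {ξ r₀ r : ℝ} {N : ℕ} (hξ : 0 < ξ) (hr₀ : 0 < r₀)
    (hr₀ξ : r₀ ≤ 2 * ξ ^ 2 * logb 2 (exp 1))
    (hr : r = (1 / ξ) * √(r₀ / (2 * logb 2 (exp 1)))) (hN : N = ⌊1 / r⌋₊) :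
    (ξ / N) ^ 2 ∈ Icc (r₀ * log 2 / 2) (2 * r₀ * log 2) := by
  have hlog2 : 0 < log 2 := log_pos one_lt_two
  have hL : logb 2 (exp 1) = (log 2)⁻¹ := by rw [logb, log_exp, one_div]
  rw [hL] at hr₀ξ hr
  set s := √(r₀ / (2 * (log 2)⁻¹))
  have hs2 : s ^ 2 = r₀ * log 2 / 2 := by
    rw [sq_sqrt (by positivity)]
    field_simp
  have hs : 0 < s := by positivity
  have hsξ : s ≤ ξ := by
    rw [← abs_of_pos hs, ← abs_of_pos hξ, ← sq_le_sq, hs2]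
    have h := mul_le_mul_of_nonneg_right hr₀ξ hlog2.le
    rw [mul_assoc, inv_mul_cancel₀ hlog2.ne', mul_one] at h
    linarith
  have hN' : N = ⌊ξ / s⌋₊ := by rw [hN, hr]; congr 1; field_simp
  obtain ⟨hlo, hhi⟩ := div_natFloor_div_mem_Icc hs hsξ
  rw [← hN'] at hlo hhi
  constructor
  · rw [← hs2]; gcongr
  · calc (ξ / N) ^ 2 ≤ (2 * s) ^ 2 := by gcongr
      _ = 2 * r₀ * log 2 := by rw [mul_pow, hs2]; ring

/-- for the binary grid `Γ* = {(δ₁ + ξ·a/N, 1 − δ₁ − ξ·a/N) : a = 0,…,N}`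
there are constants `F₀, F₁, F₂ > 0` (depending only on `δ₁, δ₂`) such that for every
`0 < r₀ ≤ 2ξ²·log₂ e`, every pair of adjacent grid points `P, Q` (first coordinates
differing by exactly `±ξ/N`) satisfies `F₀·r₀ ≤ V(P‖Q) ≤ F₁·r₀` and
`T(P‖Q) ≤ F₂·r₀^{3/2}`. -/
theorem binary_llr_moment_bounds (δ₁ δ₂ : ℝ) (h1 : 0 < δ₁) (h2 : 0 < δ₂)
    (h12 : δ₁ + δ₂ < 1) (ξ : ℝ) (hξ : ξ = 1 - δ₁ - δ₂) :
    ∃ F₀ F₁ F₂ : ℝ, 0 < F₀ ∧ 0 < F₁ ∧ 0 < F₂ ∧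
      ∀ r₀ : ℝ, 0 < r₀ → r₀ ≤ 2 * ξ ^ 2 * Real.logb 2 (Real.exp 1) →
        ∀ r : ℝ, r = (1 / ξ) * Real.sqrt (r₀ / (2 * Real.logb 2 (Real.exp 1))) →
          ∀ N : ℕ, N = ⌊1 / r⌋₊ →
            ∀ P Q : Fin 2 → ℝ,
              (∃ a : ℕ, a ≤ N ∧ P = ![δ₁ + ξ * (a : ℝ) / N, 1 - δ₁ - ξ * (a : ℝ) / N]) →
              (∃ b : ℕ, b ≤ N ∧ Q = ![δ₁ + ξ * (b : ℝ) / N, 1 - δ₁ - ξ * (b : ℝ) / N]) →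
              (Q 0 = P 0 + ξ / N ∨ Q 0 = P 0 - ξ / N) →
              F₀ * r₀ ≤ Vllr P Q ∧ Vllr P Q ≤ F₁ * r₀ ∧
                Tllr P Q ≤ F₂ * r₀ ^ ((3 : ℝ) / 2) := by
  have hξ0 : 0 < ξ := by rw [hξ]; linarith
  have hlog2 : 0 < log 2 := log_pos one_lt_two
  set F₁ := 2 * (1 / δ₁ + 1 / δ₂) ^ 2 / log 2
  refine ⟨δ₁ * δ₂ * (2 / log 2), F₁, F₁ ^ ((3 : ℝ) / 2), by positivity, by positivity,
    by positivity, ?_⟩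
  rintro r₀ hr₀ hr₀ξ r hr N hN P Q ⟨a, ha, rfl⟩ ⟨b, hb, rfl⟩ hadj
  rw [sub_sub, sub_sub]
  simp only [Matrix.cons_val_zero] at hadj
  set p := δ₁ + ξ * a / N
  set q := δ₁ + ξ * b / N
  have hp : p ∈ Icc δ₁ (1 - δ₂) := grid_point_mem_Icc hξ hξ0.le ha
  have hq : q ∈ Icc δ₁ (1 - δ₂) := grid_point_mem_Icc hξ hξ0.le hb
  have hpq : (p - q) ^ 2 = (ξ / N) ^ 2 := by
    rcases hadj with h | h <;> rw [h] <;> ring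
  have hg := binaryLlrGap_sq_mem_Icc h1 h2 hp hq (hpq ▸ grid_step_sq_mem_Icc hξ0 hr₀ hr₀ξ hr hN)
  rw [← mul_rpow (by positivity) hr₀.le, mul_assoc]
  exact binary_llr_moments_of_gap_sq h1.le h2.le hp hg
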